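/- Let r ≥ 1 be an integer and θ ∈ [0, 1/(r+1)). Then h(r,θ) ≥ w(r,θ). In particular h(r,0) ≥ (r/(e(r+1)))^r. -/

import Mathlib

open Finset

namespace ListCol

/-! ### Covers and the functions `h(s,θ,n)`, `h(s,θ)` -/

/-- The vertex set `{θ + (1/(s+1) − θ)·j/n : j ∈ [sn]}` of an `(s,θ,n)`-cover. -/
noncomputable def coverVertexSet (s : ℕ) (θ : ℝ) (n : ℕ) : Finset ℝ :=
  (Finset.range (s * n)).image fun j : ℕ => θ + (1 / ((s : ℝ) + 1) - θ) * ((j : ℝ) + 1) / (n : ℝ)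

/-- `E` is the edge set of an `(s,θ,n)`-cover: `s`-element pairwise disjoint edges
whose union is `coverVertexSet s θ n`. -/
def IsCover (s : ℕ) (θ : ℝ) (n : ℕ) (E : Finset (Finset ℝ)) : Prop :=
  (∀ e ∈ E, e.card = s) ∧
  (∀ e ∈ E, ∀ f ∈ E, e ≠ f → Disjoint e f) ∧
  (∀ y : ℝ, (∃ e ∈ E, y ∈ e) ↔ y ∈ coverVertexSet s θ n)

/-- `h(Q) = max over edges e of ∏_{y ∈ e} y`. -/
noncomputable def hEdge (E : Finset (Finset ℝ)) : ℝ :=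
  sSup {y : ℝ | ∃ e ∈ E, y = ∏ z ∈ e, z}

/-- `h(s,θ,n) = min { h(Q) : Q an (s,θ,n)-cover }`. -/
noncomputable def hCovN (s : ℕ) (θ : ℝ) (n : ℕ) : ℝ :=
  sInf {y : ℝ | ∃ E : Finset (Finset ℝ), IsCover s θ n E ∧ y = hEdge E}

/-- `h(s,θ) = inf { h(s,θ,n) : n ≥ 1 }` for `θ < 1/(s+1)`, and
`h(s,1/(s+1)) = (1/(s+1))^s`. -/
noncomputable def hCov (s : ℕ) (θ : ℝ) : ℝ :=
  if θ = 1 / ((s : ℝ) + 1) then (1 / ((s : ℝ) + 1)) ^ s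
  else sInf {y : ℝ | ∃ n : ℕ, 1 ≤ n ∧ y = hCovN s θ n}

/-! ### The function `w(r,θ)` -/

/-- `w(r,θ) = e^{−r}·(u(1 − 1/(r+1) − (r−1)θ)/u(θ))^{1/(1/(r+1) − θ)}` where
`u(y) = y^y` (so `u(0) = 1`, as `0^0 = 1` for `Real.rpow`), extended continuously
to `θ = 1/(r+1)` by its limit `(1/(r+1))^r`. -/
noncomputable def wFun (r : ℕ) (θ : ℝ) : ℝ :=
  if θ = 1 / ((r : ℝ) + 1) then (1 / ((r : ℝ) + 1)) ^ r
  else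
    Real.exp (-(r : ℝ)) *
      (((1 - 1 / ((r : ℝ) + 1) - ((r : ℝ) - 1) * θ) ^
          (1 - 1 / ((r : ℝ) + 1) - ((r : ℝ) - 1) * θ)) / θ ^ θ) ^
        (1 / (1 / ((r : ℝ) + 1) - θ))


/-! The product of all `rn` vertices of an `(r,θ,n)`-cover is the product of its `n` edge
products, hence at most `h(Q)^n`.  On the other hand its logarithm is a right Riemann sum of the
increasing function `log` over `[θ, θ + rδ]`, `δ = 1/(r+1) − θ`, with mesh `δ/n`, so it is at
least `(n/δ)·∫_θ^{θ+rδ} log = n·log w(r,θ)`.  Hence `h(Q) ≥ w(r,θ)` for every cover. -/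

open Real

lemma mul_log_sub_mul_log_le {a b : ℝ} (ha : 0 ≤ a) (hb : 0 < b) :
    a * log b - a * log a ≤ b - a := by
  rcases ha.eq_or_lt with rfl | ha
  · simpa using hb.le
  have h := log_le_sub_one_of_pos (div_pos hb ha)
  rw [log_div hb.ne' ha.ne'] at h
  calc a * log b - a * log a = a * (log b - log a) := by ring
    _ ≤ a * (b / a - 1) := by gcongr
    _ = b - a := by field_simp

/-- The left side is `∫_c^{c+Nd} log`, since `t log t - t` is a primitive of `log`. -/
lemma mul_log_sub_le_sum_log {c d : ℝ} (hc : 0 ≤ c) (hd : 0 < d) (N : ℕ) :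
    (c + N * d) * log (c + N * d) - c * log c - N * d ≤
      d * ∑ j ∈ range N, log (c + (j + 1) * d) := by
  induction N with
  | zero => simp
  | succ N ih =>
    have hstep := mul_log_sub_mul_log_le (a := c + N * d) (b := c + (N + 1) * d)
      (by positivity) (by positivity)
    rw [sum_range_succ, mul_add]
    push_cast
    linarith

lemma rpow_self_eq_exp {x : ℝ} (hx : 0 ≤ x) : x ^ x = exp (x * log x) := by
  rcases hx.eq_or_lt with rfl | hx
  · simp
  · rw [rpow_def_of_pos hx, mul_comm]

lemma wFun_eq_exp {r : ℕ} {θ δ : ℝ} (hθ : 0 ≤ θ) (hδ : 0 < δ)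
    (hθδ : θ + δ = 1 / ((r : ℝ) + 1)) :
    wFun r θ = exp (-r + ((θ + r * δ) * log (θ + r * δ) - θ * log θ) / δ) := by
  have hA : 1 - 1 / ((r : ℝ) + 1) - ((r : ℝ) - 1) * θ = θ + r * δ := by
    have h1 : ((r : ℝ) + 1) * (θ + δ) = 1 := by rw [hθδ]; field_simp
    rw [← hθδ]; linear_combination -h1
  rw [wFun, if_neg (by linarith), hA, ← hθδ, add_sub_cancel_left,
    rpow_self_eq_exp (by positivity), rpow_self_eq_exp hθ, ← exp_sub, ← exp_mul, ← exp_add]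
  ring_nf

lemma wFun_zero {r : ℕ} (hr : 0 < r) : wFun r 0 = ((r : ℝ) / (exp 1 * ((r : ℝ) + 1))) ^ r := by
  have hr' : (0 : ℝ) < r := by exact_mod_cast hr
  rw [wFun_eq_exp le_rfl (δ := 1 / ((r : ℝ) + 1)) (by positivity) (zero_add _),
    ← exp_log (show 0 < ((r : ℝ) / (exp 1 * ((r : ℝ) + 1))) ^ r by positivity), log_pow,
    log_div hr'.ne' (by positivity), log_mul (by positivity) (by positivity), log_exp,
    zero_add, zero_mul, sub_zero, mul_one_div, log_div hr'.ne' (by positivity)]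
  congr 1
  field_simp
  ring

lemma prod_le_hEdge {E : Finset (Finset ℝ)} {e : Finset ℝ} (he : e ∈ E) :
    ∏ z ∈ e, z ≤ hEdge E := by
  refine le_csSup ((E.image fun e => ∏ z ∈ e, z).finite_toSet.subset ?_).bddAbove ⟨e, he, rfl⟩
  rintro _ ⟨e, he, rfl⟩
  exact mem_coe.2 (mem_image_of_mem _ he)

lemma prod_prod_le_hEdge_pow {E : Finset (Finset ℝ)} (hE : ∀ e ∈ E, ∀ z ∈ e, 0 ≤ z) :
    ∏ e ∈ E, ∏ z ∈ e, z ≤ hEdge E ^ E.card := by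
  rw [← prod_const]
  exact prod_le_prod (fun e he => prod_nonneg (hE e he)) fun e he => prod_le_hEdge he

lemma exists_partition_image_range {α : Type*} [DecidableEq α] {v : ℕ → α}
    (hv : Function.Injective v) (s n : ℕ) :
    ∃ E : Finset (Finset α), (∀ e ∈ E, e.card = s) ∧ (E : Set (Finset α)).PairwiseDisjoint id ∧
      E.biUnion id = (range (s * n)).image v := by
  refine ⟨(range n).image fun i => (Ico (s * i) (s * i + s)).image v, ?_, ?_, ?_⟩
  · simp [card_image_of_injective _ hv]
  · intro e he f hf hne
    obtain ⟨i, -, rfl⟩ := mem_image.1 he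
    obtain ⟨i', -, rfl⟩ := mem_image.1 hf
    have hii' : i ≠ i' := fun h => hne (by rw [h])
    refine (disjoint_image hv).2 (disjoint_left.2 fun j hj hj' => ?_)
    simp only [mem_Ico] at hj hj'
    rcases Nat.lt_or_gt_of_ne hii' with h | h
    · have : s * i + s ≤ s * i' := by simpa [Nat.mul_succ] using Nat.mul_le_mul_left s h
      omega
    · have : s * i' + s ≤ s * i := by simpa [Nat.mul_succ] using Nat.mul_le_mul_left s h
      omega
  · ext y
    simp only [mem_biUnion, mem_image, mem_range, mem_Ico, id_eq, exists_exists_and_eq_and]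
    constructor
    · rintro ⟨i, hi, j, hj, rfl⟩
      have : s * i + s ≤ s * n := by simpa [Nat.mul_succ] using Nat.mul_le_mul_left s hi
      exact ⟨j, by omega, rfl⟩
    · rintro ⟨j, hj, rfl⟩
      have hs : 0 < s := Nat.pos_of_ne_zero fun h => by simp [h] at hj
      refine ⟨j / s, Nat.div_lt_of_lt_mul hj, j, ?_, rfl⟩
      have := Nat.div_add_mod j s
      have := Nat.mod_lt j hs
      omega

noncomputable def coverVertex (s : ℕ) (θ : ℝ) (n j : ℕ) : ℝ :=
  θ + (1 / ((s : ℝ) + 1) - θ) * ((j : ℝ) + 1) / (n : ℝ)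

section Cover

variable {r n : ℕ} {θ : ℝ} {E : Finset (Finset ℝ)}

lemma coverVertexSet_eq_image :
    coverVertexSet r θ n = (range (r * n)).image (coverVertex r θ n) := rfl

lemma coverVertex_strictMono (hθ : θ < 1 / ((r : ℝ) + 1)) (hn : 0 < n) :
    StrictMono (coverVertex r θ n) := by
  intro j k hjk
  have hjk' : (j : ℝ) < k := by exact_mod_cast hjk
  have hδ : 0 < 1 / ((r : ℝ) + 1) - θ := sub_pos.2 hθ
  unfold coverVertex
  gcongr

lemma coverVertex_pos (hθ0 : 0 ≤ θ) (hθ : θ < 1 / ((r : ℝ) + 1)) (hn : 0 < n) (j : ℕ) :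
    0 < coverVertex r θ n j := by
  have hδ : 0 < 1 / ((r : ℝ) + 1) - θ := sub_pos.2 hθ
  unfold coverVertex
  generalize 1 / ((r : ℝ) + 1) - θ = δ at hδ
  positivity

lemma pos_of_mem_coverVertexSet (hθ0 : 0 ≤ θ) (hθ : θ < 1 / ((r : ℝ) + 1)) (hn : 0 < n) {v : ℝ}
    (hv : v ∈ coverVertexSet r θ n) : 0 < v := by
  obtain ⟨j, -, rfl⟩ := mem_image.1 hv
  exact coverVertex_pos hθ0 hθ hn j

lemma card_coverVertexSet (hθ : θ < 1 / ((r : ℝ) + 1)) (hn : 0 < n) :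
    (coverVertexSet r θ n).card = r * n := by
  rw [coverVertexSet_eq_image, card_image_of_injective _ (coverVertex_strictMono hθ hn).injective,
    card_range]

lemma pow_wFun_le_prod_coverVertexSet (hθ0 : 0 ≤ θ) (hθ : θ < 1 / ((r : ℝ) + 1)) (hn : 0 < n) :
    wFun r θ ^ n ≤ ∏ v ∈ coverVertexSet r θ n, v := by
  set δ := 1 / ((r : ℝ) + 1) - θ with hδ
  have hδ0 : 0 < δ := sub_pos.2 hθ
  have hn' : (0 : ℝ) < n := by exact_mod_cast hn
  have hvertex : ∀ j : ℕ, coverVertex r θ n j = θ + (j + 1) * (δ / n) := fun j => by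
    rw [coverVertex]; ring
  have hlength : ((r * n : ℕ) : ℝ) * (δ / n) = r * δ := by push_cast; field_simp
  have hriemann := mul_log_sub_le_sum_log hθ0 (div_pos hδ0 hn') (r * n)
  rw [hlength] at hriemann
  rw [coverVertexSet_eq_image,
    prod_image fun j _ k _ h => (coverVertex_strictMono hθ hn).injective h,
    wFun_eq_exp hθ0 hδ0 (by rw [hδ]; ring), ← exp_nat_mul,
    ← exp_log (prod_pos fun j _ => coverVertex_pos hθ0 hθ hn j),
    log_prod fun j _ => (coverVertex_pos hθ0 hθ hn j).ne']
  simp only [hvertex] at hriemann ⊢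
  refine exp_le_exp.2 ?_
  set S := ∑ j ∈ range (r * n), log (θ + (j + 1) * (δ / n))
  set X := (θ + r * δ) * log (θ + r * δ) - θ * log θ
  calc (n : ℝ) * (-r + X / δ) = n / δ * (X - r * δ) := by field_simp; ring
    _ ≤ n / δ * (δ / n * S) := by gcongr
    _ = S := by field_simp

lemma exists_isCover (hθ : θ < 1 / ((r : ℝ) + 1)) (hn : 0 < n) : ∃ E, IsCover r θ n E := by
  obtain ⟨E, hcard, hdisj, hunion⟩ :=
    exists_partition_image_range (coverVertex_strictMono hθ hn).injective r n
  refine ⟨E, hcard, fun e he f hf => hdisj he hf, fun y => ?_⟩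
  rw [coverVertexSet_eq_image, ← hunion, mem_biUnion]
  rfl

lemma IsCover.biUnion_eq (hE : IsCover r θ n E) : E.biUnion id = coverVertexSet r θ n := by
  ext y
  simpa using hE.2.2 y

lemma IsCover.pairwiseDisjoint (hE : IsCover r θ n E) :
    (E : Set (Finset ℝ)).PairwiseDisjoint id :=
  fun e he f hf => hE.2.1 e he f hf

lemma IsCover.prod_prod_eq (hE : IsCover r θ n E) :
    ∏ e ∈ E, ∏ z ∈ e, z = ∏ v ∈ coverVertexSet r θ n, v := by
  rw [← hE.biUnion_eq, prod_biUnion hE.pairwiseDisjoint]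
  rfl

lemma IsCover.card_eq (hE : IsCover r θ n E) (hr : 0 < r) (hθ : θ < 1 / ((r : ℝ) + 1))
    (hn : 0 < n) : E.card = n := by
  have h : r * n = ∑ e ∈ E, e.card := by
    rw [← card_coverVertexSet hθ hn, ← hE.biUnion_eq, card_biUnion hE.pairwiseDisjoint]
    rfl
  rw [sum_congr rfl hE.1, sum_const, smul_eq_mul, mul_comm] at h
  exact (Nat.eq_of_mul_eq_mul_right hr h).symm

lemma wFun_le_hEdge (hθ0 : 0 ≤ θ) (hθ : θ < 1 / ((r : ℝ) + 1)) (hr : 0 < r) (hn : 0 < n)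
    (hE : IsCover r θ n E) : wFun r θ ≤ hEdge E := by
  have hpos : ∀ e ∈ E, ∀ z ∈ e, 0 < z := fun e he z hz =>
    pos_of_mem_coverVertexSet hθ0 hθ hn ((hE.2.2 z).1 ⟨e, he, hz⟩)
  have hcard := hE.card_eq hr hθ hn
  obtain ⟨e, he⟩ : E.Nonempty := card_pos.1 (hcard ▸ hn)
  have hEdge_nonneg : 0 ≤ hEdge E := (prod_pos (hpos e he)).le.trans (prod_le_hEdge he)
  refine le_of_pow_le_pow_left₀ hn.ne' hEdge_nonneg ?_
  calc wFun r θ ^ n ≤ ∏ v ∈ coverVertexSet r θ n, v := pow_wFun_le_prod_coverVertexSet hθ0 hθ hn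
    _ = ∏ e ∈ E, ∏ z ∈ e, z := hE.prod_prod_eq.symm
    _ ≤ hEdge E ^ n := hcard ▸ prod_prod_le_hEdge_pow fun e he z hz => (hpos e he z hz).le

lemma wFun_le_hCovN (hθ0 : 0 ≤ θ) (hθ : θ < 1 / ((r : ℝ) + 1)) (hr : 0 < r) (hn : 0 < n) :
    wFun r θ ≤ hCovN r θ n := by
  obtain ⟨E, hE⟩ := exists_isCover hθ hn
  refine le_csInf ⟨_, E, hE, rfl⟩ ?_
  rintro _ ⟨E, hE, rfl⟩
  exact wFun_le_hEdge hθ0 hθ hr hn hE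

lemma wFun_le_hCov (hθ0 : 0 ≤ θ) (hθ : θ < 1 / ((r : ℝ) + 1)) (hr : 0 < r) :
    wFun r θ ≤ hCov r θ := by
  rw [hCov, if_neg hθ.ne]
  refine le_csInf ⟨_, 1, le_rfl, rfl⟩ ?_
  rintro _ ⟨n, hn, rfl⟩
  exact wFun_le_hCovN hθ0 hθ hr hn

end Cover

/-- **Lemma.** For `r ≥ 1` and `θ ∈ [0,1/(r+1))`, `h(r,θ) ≥ w(r,θ)`; in particular
`h(r,0) ≥ (r/(e(r+1)))^r`. -/
theorem hCov_ge_w (r : ℕ) (hr : 1 ≤ r) :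
    (∀ θ : ℝ, 0 ≤ θ → θ < 1 / ((r : ℝ) + 1) → wFun r θ ≤ hCov r θ) ∧
    ((r : ℝ) / (Real.exp 1 * ((r : ℝ) + 1))) ^ r ≤ hCov r 0 :=
  ⟨fun _ hθ0 hθ => wFun_le_hCov hθ0 hθ hr,
    wFun_zero hr ▸ wFun_le_hCov le_rfl (by positivity) hr⟩

end ListCol
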